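/- arXiv:2507.12780 — 2 statements merged into one kernel-verified Lean document; each statement's English description precedes it below -/
import Mathlib

section
/- If the landmark rows F_I span the row space of F, then the Nyström approximation is exact: C W† Cᵀ = F Fᵀ. -/
open Matrix

/-- `Wd` is the Moore–Penrose pseudoinverse of `W` (the four Penrose conditions). -/
def IsMoorePenrose {m : ℕ} (W Wd : Matrix (Fin m) (Fin m) ℝ) : Prop :=
  W * Wd * W = W ∧ Wd * W * Wd = Wd ∧ (W * Wd)ᵀ = W * Wd ∧ (Wd * W)ᵀ = Wd * W

/-!
If the rows of `F` lie in the row space of `F_I`, then `F = A F_I` for some `A`, so that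
`C = A W` and `C W† Cᵀ = A (W W† W) Aᵀ = A W Aᵀ = F Fᵀ`.
-/

namespace Matrix

variable {R n m k : Type*} [Fintype m]

theorem exists_eq_mul_of_span_range_le [Semiring R] {F : Matrix n k R} {B : Matrix m k R}
    (h : Submodule.span R (Set.range F) ≤ Submodule.span R (Set.range B)) :
    ∃ A : Matrix n m R, F = A * B := by
  choose A hA using fun i ↦
    (Submodule.mem_span_range_iff_exists_fun R).1 (h (Submodule.subset_span ⟨i, rfl⟩))
  refine ⟨of A, ?_⟩
  ext i j
  simp [mul_apply, ← hA i, Finset.sum_apply]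

theorem nystrom_eq_mul_transpose_of_eq_mul [CommSemiring R] [Fintype k]
    {F : Matrix n k R} {B : Matrix m k R} {X : Matrix m m R} (A : Matrix n m R)
    (hF : F = A * B) (hX : B * Bᵀ * X * (B * Bᵀ) = B * Bᵀ) :
    F * Bᵀ * X * (F * Bᵀ)ᵀ = F * Fᵀ := by
  subst hF
  calc A * B * Bᵀ * X * (A * B * Bᵀ)ᵀ = A * (B * Bᵀ * X * (B * Bᵀ)) * Aᵀ := by
        simp only [transpose_mul, transpose_transpose, Matrix.mul_assoc]
    _ = A * B * (A * B)ᵀ := by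
        rw [hX, transpose_mul]
        simp only [Matrix.mul_assoc]

end Matrix

theorem nystrom_exact_of_row_space_eq_general
    {n d m : ℕ} (F : Matrix (Fin n) (Fin d) ℝ)
    (FI : Matrix (Fin m) (Fin d) ℝ)
    (hspan : Submodule.span ℝ (Set.range fun i : Fin m => FI i) =
             Submodule.span ℝ (Set.range fun i : Fin n => F i))
    (Cmat : Matrix (Fin n) (Fin m) ℝ) (hC : Cmat = F * FIᵀ)
    (W : Matrix (Fin m) (Fin m) ℝ) (hW : W = FI * FIᵀ)
    (Wd : Matrix (Fin m) (Fin m) ℝ) (hWd : IsMoorePenrose W Wd) :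
    Cmat * Wd * Cmatᵀ = F * Fᵀ := by
  obtain ⟨A, hA⟩ := exists_eq_mul_of_span_range_le hspan.ge
  subst hC hW
  exact nystrom_eq_mul_transpose_of_eq_mul A hA hWd.1

/-- if the landmark rows `F_I` span the row space of `F`, the
Nyström approximation is exact: `C W† Cᵀ = F Fᵀ`. -/
theorem nystrom_exact_of_row_space_eq
    {n d m : ℕ} (F : Matrix (Fin n) (Fin d) ℝ)
    (I : Fin m ↪ Fin n)
    (FI : Matrix (Fin m) (Fin d) ℝ) (hFI : FI = F.submatrix I id)
    (hspan : Submodule.span ℝ (Set.range fun i : Fin m => FI i) =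
             Submodule.span ℝ (Set.range fun i : Fin n => F i))
    (Cmat : Matrix (Fin n) (Fin m) ℝ) (hC : Cmat = F * FIᵀ)
    (W : Matrix (Fin m) (Fin m) ℝ) (hW : W = FI * FIᵀ)
    (Wd : Matrix (Fin m) (Fin m) ℝ) (hWd : IsMoorePenrose W Wd) :
    Cmat * Wd * Cmatᵀ = F * Fᵀ :=
  nystrom_exact_of_row_space_eq_general F FI hspan Cmat hC W hW Wd hWd
end

section
/- For positive semidefinite matrices, the truncated nuclear norm ‖K‖_r = ∑_{i > r} λ̂_i(K) admits the variational characterization ‖K‖_r = min_{U ∈ ℝ^{n×r}, UᵀU = I_r} [tr(K) − tr(Uᵀ K U)]. -/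
/-!
Diagonalize `K = V diag(λ) Vᵀ`. For `U` with orthonormal columns, `W = VᵀU` has orthonormal
columns too, and `tr(UᵀKU) = ∑ λᵢ cᵢ` where `cᵢ` is the squared norm of the `i`-th row of `W`.
These weights lie in `[0, 1]` (as `WWᵀ` is an orthogonal projection) and sum to `r`, so
`∑ λᵢ cᵢ` is at most the sum of the `r` largest eigenvalues, with equality when the columns of
`U` are the corresponding eigenvectors.
-/

open Matrix Finset

theorem sum_mul_le_sum_of_threshold {ι R : Type*} [Fintype ι]
    [Field R] [LinearOrder R] [IsStrictOrderedRing R]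
    (s : Finset ι) (f c : ι → R) (t : R)
    (hs : ∀ i ∈ s, t ≤ f i) (hsc : ∀ i ∉ s, f i ≤ t)
    (hc0 : ∀ i, 0 ≤ c i) (hc1 : ∀ i, c i ≤ 1) (hsum : ∑ i, c i = #s) :
    ∑ i, f i * c i ≤ ∑ i ∈ s, f i := by
  classical
  -- subtracting `t` from `f` changes neither side since `∑ c = #s`; then every term has a sign
  have hdiff : ∑ i, f i * c i - ∑ i ∈ s, f i =
      ∑ i, (f i - t) * (c i - if i ∈ s then 1 else 0) := by
    simp only [mul_sub, sub_mul, sum_sub_distrib, mul_ite, mul_one, mul_zero, sum_ite_mem,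
      univ_inter, ← mul_sum, hsum, sum_const, nsmul_eq_mul]
    ring
  have hterm : ∀ i, (f i - t) * (c i - if i ∈ s then 1 else 0) ≤ 0 := by
    intro i
    split_ifs with hi
    · exact mul_nonpos_of_nonneg_of_nonpos (sub_nonneg.2 (hs i hi)) (sub_nonpos.2 (hc1 i))
    · exact mul_nonpos_of_nonpos_of_nonneg (sub_nonpos.2 (hsc i hi)) (by simpa using hc0 i)
  linarith [sum_nonpos fun i (_ : i ∈ univ) => hterm i]

theorem trace_transpose_mul_diagonal_mul {m n R : Type*} [Fintype m] [Fintype n] [DecidableEq m]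
    [CommSemiring R] (W : Matrix m n R) (d : m → R) :
    (Wᵀ * diagonal d * W).trace = ∑ i, d i * ∑ j, W i j ^ 2 := by
  simp only [trace, diag_apply, mul_apply (M := Wᵀ * diagonal d), mul_diagonal, transpose_apply,
    mul_sum]
  rw [sum_comm]
  exact sum_congr rfl fun i _ => sum_congr rfl fun j _ => by ring

section Orthonormal
variable {m n R : Type*} [Fintype m] [Fintype n] [DecidableEq n]

theorem sum_sq_row_le_one_of_transpose_mul_self [Field R] [LinearOrder R] [IsStrictOrderedRing R]
    {W : Matrix m n R} (hW : Wᵀ * W = 1) (i : m) :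
    ∑ j, W i j ^ 2 ≤ 1 := by
  -- `P = WWᵀ` is a symmetric idempotent, so `Pᵢᵢ = ∑ₖ Pᵢₖ² ≥ Pᵢᵢ²`
  set P := W * Wᵀ
  have hdiag : P i i = ∑ j, W i j ^ 2 := by
    simp only [P, mul_apply, transpose_apply, sq]
  have hidem : P * P = P := by
    simp only [P, Matrix.mul_assoc, ← Matrix.mul_assoc Wᵀ, hW, Matrix.one_mul]
  have hsymm : ∀ k, P k i = P i k := fun k => by
    simp only [P, mul_apply, transpose_apply, mul_comm]
  have : P i i ^ 2 ≤ P i i := calc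
    P i i ^ 2 ≤ ∑ k, P i k * P k i := by
      rw [sq]
      refine single_le_sum (f := fun k => P i k * P k i) (fun k _ => ?_) (mem_univ i)
      rw [hsymm k]; exact mul_self_nonneg _
    _ = P i i := by rw [← mul_apply, hidem]
  rw [← hdiag]
  nlinarith

theorem sum_sum_sq_eq_card_of_transpose_mul_self [CommSemiring R] {W : Matrix m n R}
    (hW : Wᵀ * W = 1) :
    ∑ i, ∑ j, W i j ^ 2 = Fintype.card n := by
  have := congrArg trace hW
  simp only [trace, diag_apply, mul_apply, transpose_apply, one_apply_eq, sum_const, card_univ,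
    nsmul_eq_mul, mul_one] at this
  rw [sum_comm, ← this]
  simp only [sq]

end Orthonormal

namespace Matrix.IsHermitian
variable {ι : Type*} [Fintype ι] [DecidableEq ι] {A : Matrix ι ι ℝ} (hA : A.IsHermitian)

theorem transpose_eigenvectorUnitary_mul_self :
    (hA.eigenvectorUnitary : Matrix ι ι ℝ)ᵀ * hA.eigenvectorUnitary = 1 := by
  rw [← conjTranspose_eq_transpose_of_trivial, ← star_eq_conjTranspose]
  exact Unitary.coe_star_mul_self _

theorem eigenvectorUnitary_mul_transpose_self :
    (hA.eigenvectorUnitary : Matrix ι ι ℝ) * (hA.eigenvectorUnitary : Matrix ι ι ℝ)ᵀ = 1 := by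
  rw [← conjTranspose_eq_transpose_of_trivial, ← star_eq_conjTranspose]
  exact Unitary.coe_mul_star_self _

theorem transpose_eigenvectorUnitary_mul_mul_eigenvectorUnitary :
    (hA.eigenvectorUnitary : Matrix ι ι ℝ)ᵀ * A * hA.eigenvectorUnitary
      = diagonal hA.eigenvalues := by
  have h := hA.conjStarAlgAut_star_eigenvectorUnitary
  simpa [Unitary.conjStarAlgAut_star_apply, star_eq_conjTranspose] using h

theorem eq_eigenvectorUnitary_mul_diagonal_mul_transpose :
    A = hA.eigenvectorUnitary * diagonal hA.eigenvalues *
      (hA.eigenvectorUnitary : Matrix ι ι ℝ)ᵀ := by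
  have h := hA.spectral_theorem
  simpa [Unitary.conjStarAlgAut_apply, star_eq_conjTranspose] using h

theorem trace_transpose_mul_mul_eq_sum_eigenvalues_mul {κ : Type*} [Fintype κ]
    (U : Matrix ι κ ℝ) :
    (Uᵀ * A * U).trace = ∑ i, hA.eigenvalues i *
      ∑ j, ((hA.eigenvectorUnitary : Matrix ι ι ℝ)ᵀ * U) i j ^ 2 := by
  rw [← trace_transpose_mul_diagonal_mul]
  conv_lhs => rw [hA.eq_eigenvectorUnitary_mul_diagonal_mul_transpose]
  simp only [transpose_mul, transpose_transpose, Matrix.mul_assoc]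

theorem transpose_mul_self_submatrix_eigenvectorUnitary {κ : Type*} [DecidableEq κ] (g : κ ↪ ι) :
    ((hA.eigenvectorUnitary : Matrix ι ι ℝ).submatrix id g)ᵀ *
      (hA.eigenvectorUnitary : Matrix ι ι ℝ).submatrix id g = 1 := by
  rw [transpose_submatrix, ← submatrix_mul _ _ _ _ _ Function.bijective_id,
    hA.transpose_eigenvectorUnitary_mul_self, submatrix_one_embedding]

theorem trace_transpose_mul_mul_submatrix_eigenvectorUnitary {κ : Type*} [Fintype κ] [DecidableEq κ]
    (g : κ ↪ ι) :
    (((hA.eigenvectorUnitary : Matrix ι ι ℝ).submatrix id g)ᵀ * A *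
      (hA.eigenvectorUnitary : Matrix ι ι ℝ).submatrix id g).trace = ∑ j, hA.eigenvalues (g j) := by
  set V : Matrix ι ι ℝ := (hA.eigenvectorUnitary : Matrix ι ι ℝ)
  have hsub : Vᵀ.submatrix g id * A * V.submatrix id g = (Vᵀ * A * V).submatrix g g := by
    rw [submatrix_mul _ _ _ id _ Function.bijective_id,
      submatrix_mul _ _ _ id _ Function.bijective_id, submatrix_id_id]
  rw [transpose_submatrix, hsub, hA.transpose_eigenvectorUnitary_mul_mul_eigenvectorUnitary,
    submatrix_diagonal_embedding, trace_diagonal, Function.comp_def]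

end Matrix.IsHermitian

theorem Fin.mem_map_castLEEmb_univ {r n : ℕ} (hr : r ≤ n) (i : Fin n) :
    i ∈ univ.map (Fin.castLEEmb hr) ↔ (i : ℕ) < r := by
  rw [← mem_coe, coe_map, coe_univ, Set.image_univ]
  exact Set.ext_iff.1 (Fin.range_castLE hr) i

theorem sum_mul_le_sum_map_castLEEmb {R : Type*} [Field R] [LinearOrder R] [IsStrictOrderedRing R]
    {n r : ℕ} (hr : r ≤ n) {f c : Fin n → R} (hf : Antitone f) (hf0 : ∀ i, 0 ≤ f i)
    (hc0 : ∀ i, 0 ≤ c i) (hc1 : ∀ i, c i ≤ 1) (hsum : ∑ i, c i = r) :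
    ∑ i, f i * c i ≤ ∑ i ∈ univ.map (Fin.castLEEmb hr), f i := by
  refine sum_mul_le_sum_of_threshold _ f c (if h : r < n then f ⟨r, h⟩ else 0)
    (fun i hi => ?_) (fun i hi => ?_) hc0 hc1 (by rw [hsum, card_map, card_univ, Fintype.card_fin])
  · rw [Fin.mem_map_castLEEmb_univ] at hi
    split_ifs with h
    · exact hf (Fin.mk_le_mk.2 hi.le)
    · exact hf0 i
  · rw [Fin.mem_map_castLEEmb_univ, not_lt] at hi
    rw [dif_pos (hi.trans_lt i.2)]
    exact hf (Fin.mk_le_mk.2 hi)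

/-- variational characterization of the truncated nuclear norm:
`‖K‖_r = ∑_{i>r} λ̂_i` is the minimum of `tr(K) − tr(Uᵀ K U)` over all `U ∈ ℝ^{n×r}`
with orthonormal columns. -/
theorem tnn_variational
    {n r : ℕ} (hr : r ≤ n)
    (K : Matrix (Fin n) (Fin n) ℝ) (hK : K.PosSemidef)
    (lam : Fin n → ℝ)
    (hsort : ∀ i j : Fin n, i ≤ j → lam j ≤ lam i)
    (e : Fin n ≃ Fin n) (hlam : ∀ i, lam i = hK.1.eigenvalues (e i)) :
    IsLeast
      {x : ℝ | ∃ U : Matrix (Fin n) (Fin r) ℝ,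
        Uᵀ * U = 1 ∧ x = K.trace - (Uᵀ * K * U).trace}
      (∑ i : Fin n, if r ≤ (i : ℕ) then lam i else 0) := by
  set s := univ.map (Fin.castLEEmb hr)
  have htrace : K.trace = ∑ i, lam i := by
    simp only [hK.1.trace_eq_sum_eigenvalues, RCLike.ofReal_real_eq_id, id, hlam, e.sum_comp]
  have htail : (∑ i : Fin n, if r ≤ (i : ℕ) then lam i else 0) = K.trace - ∑ i ∈ s, lam i := by
    rw [htrace, ← sum_compl_add_sum s lam, add_sub_cancel_right, ← sum_filter]
    congr 1
    ext i
    simp only [mem_filter, mem_univ, true_and, mem_compl, s, Fin.mem_map_castLEEmb_univ, not_lt]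
  set V : Matrix (Fin n) (Fin n) ℝ := (hK.1.eigenvectorUnitary : Matrix (Fin n) (Fin n) ℝ)
  refine ⟨⟨_, hK.1.transpose_mul_self_submatrix_eigenvectorUnitary
    ((Fin.castLEEmb hr).trans e.toEmbedding), ?_⟩, ?_⟩
  · rw [hK.1.trace_transpose_mul_mul_submatrix_eigenvectorUnitary, htail, sum_map]
    simp [hlam]
  · rintro _ ⟨U, hU, rfl⟩
    have hW : (Vᵀ * U)ᵀ * (Vᵀ * U) = 1 := by
      rw [transpose_mul, transpose_transpose, Matrix.mul_assoc, ← Matrix.mul_assoc V,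
        hK.1.eigenvectorUnitary_mul_transpose_self, Matrix.one_mul, hU]
    rw [htail, hK.1.trace_transpose_mul_mul_eq_sum_eigenvalues_mul, ← e.sum_comp]
    simp only [← hlam]
    refine sub_le_sub_left (sum_mul_le_sum_map_castLEEmb hr (fun i j h => hsort i j h)
      (fun i => hlam i ▸ hK.eigenvalues_nonneg _) (fun i => sum_nonneg fun j _ => sq_nonneg _)
      (fun i => sum_sq_row_le_one_of_transpose_mul_self hW _) ?_) _
    rw [e.sum_comp (fun i => ∑ j, (Vᵀ * U) i j ^ 2), sum_sum_sq_eq_card_of_transpose_mul_self hW,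
      Fintype.card_fin]
end
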